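/- If G and H are connected graphs, then σ(G ∘ H) ≤ σ(G)·|V(H)| + σ(H), where ∘ denotes the lexicographic product. -/

import Mathlib

/-! Surrounding Cops and Robbers.

Game state: positions of the `k` cops (`Fin k → V`) and of the robber (`V`),
with the cops to move.  On the cops' turn each cop may stay or move along an
edge; the cops win immediately if every neighbour of the robber's vertex is
occupied by a cop.  Otherwise the robber must stay or move along an edge,
ending on a vertex not occupied by any cop (in particular, if a cop lands on
the robber's vertex he is compelled to move off it).  `CopsWin` is the least
fixed point expressing that the cops can force a win in finitely many moves. -/

namespace SurroundGame

variable {V : Type*} (G : SimpleGraph V)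

/-- One legal simultaneous move of the cops: each cop stays or moves along an edge. -/
def CopsMove {k : ℕ} (c c' : Fin k → V) : Prop :=
  ∀ i, c' i = c i ∨ G.Adj (c i) (c' i)

/-- One legal move of the robber (ignoring cop positions): stay or move along an edge. -/
def RobberMove (r r' : V) : Prop :=
  r' = r ∨ G.Adj r r'

/-- The robber at `r` is surrounded: every neighbour of `r` is occupied by a cop. -/
def Surrounded {k : ℕ} (c : Fin k → V) (r : V) : Prop :=
  ∀ w, G.Adj r w → ∃ i, c i = w

/-- With cops at `c`, robber at `r` and the cops to move, the cops can force a win: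
they make a legal move after which either the robber is surrounded, or every legal
robber response (to a vertex free of cops) leads to a position where they again win. -/
inductive CopsWin : {k : ℕ} → (Fin k → V) → V → Prop
  | surround {k : ℕ} (c : Fin k → V) (r : V) (c' : Fin k → V)
      (hmove : CopsMove G c c')
      (hsur : Surrounded G c' r) :
      CopsWin c r
  | step {k : ℕ} (c : Fin k → V) (r : V) (c' : Fin k → V)
      (hmove : CopsMove G c c')
      (hnext : ∀ r', RobberMove G r r' → (∀ i, c' i ≠ r') → CopsWin c' r') :
      CopsWin c r

/-- `k` cops have a winning strategy on `G`: they have an initial placement such that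
whatever starting vertex (unoccupied by cops) the robber picks, the cops win. -/
def CopsWinWith (k : ℕ) : Prop :=
  ∃ c : Fin k → V, ∀ r : V, (∀ i, c i ≠ r) → CopsWin G c r

/-- The surrounding cop number: the least number of cops with a winning strategy. -/
noncomputable def surroundNumber : ℕ :=
  sInf {k | CopsWinWith G k}

end SurroundGame


open SurroundGame

/-- The lexicographic product `G ∘ H`. -/
def lexProd {α β : Type*} (G : SimpleGraph α) (H : SimpleGraph β) :
    SimpleGraph (α × β) :=
  SimpleGraph.fromRel (fun x y => G.Adj x.1 y.1 ∨ (x.1 = y.1 ∧ H.Adj x.2 y.2))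


/-! The `σ(G)·|V(H)|` cops play a winning strategy of `G` with whole fibres: whenever a cop of
`G` stands on `a`, cops occupy every vertex of `{a} × V(H)`, and the robber is shadowed by his
projection to `G`. When that strategy surrounds the shadow at `g`, all fibres adjacent to
`{g} × V(H)` are full, so the robber is trapped in `{g} × V(H)`, a copy of `H`. The remaining
`σ(H)` cops walk, one step at a time, to the starting positions of a winning strategy of `H` inside
this fibre (possible since `G ∘ H` is connected) and then play it. -/

section

variable {α β : Type*} {G : SimpleGraph α} {H : SimpleGraph β}

@[simp]
theorem lexProd_adj {x y : α × β} :
    (lexProd G H).Adj x y ↔ G.Adj x.1 y.1 ∨ (x.1 = y.1 ∧ H.Adj x.2 y.2) := by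
  simp only [lexProd, SimpleGraph.fromRel_adj]
  constructor
  · rintro ⟨-, (h | ⟨h₁, h₂⟩) | (h | ⟨h₁, h₂⟩)⟩
    exacts [.inl h, .inr ⟨h₁, h₂⟩, .inl h.symm, .inr ⟨h₁.symm, h₂.symm⟩]
  · rintro (h | ⟨h₁, h₂⟩)
    exacts [⟨fun e => h.ne congr($e.1), .inl (.inl h)⟩,
      ⟨fun e => h₂.ne congr($e.2), .inl (.inr ⟨h₁, h₂⟩)⟩]

theorem lexProd_preconnected (hG : G.Preconnected) (hH : H.Preconnected) :
    (lexProd G H).Preconnected := by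
  rintro ⟨a, b⟩ ⟨a', b'⟩
  let inFiber (a : α) : H →g lexProd G H := ⟨(a, ·), by simp⟩
  let alongG (b : β) : G →g lexProd G H := ⟨(·, b), by simp⟩
  exact ((hG a a').map (alongG b)).trans ((hH b b').map (inFiber a'))

namespace SurroundGame

section Game

variable {V : Type*} {Γ : SimpleGraph V}

theorem CopsMove.refl {k : ℕ} (c : Fin k → V) : CopsMove Γ c c :=
  fun _ => .inl rfl

theorem CopsMove.append {m n : ℕ} {u u' : Fin m → V} {v v' : Fin n → V}
    (hu : CopsMove Γ u u') (hv : CopsMove Γ v v') :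
    CopsMove Γ (Fin.append u v) (Fin.append u' v') :=
  Fin.addCases (fun i => by simpa using hu i) (fun i => by simpa using hv i)

theorem CopsMove.update {k : ℕ} (c : Fin k → V) (j : Fin k) {x : V} (hx : Γ.Adj (c j) x) :
    CopsMove Γ c (Function.update c j x) := by
  intro i
  rcases eq_or_ne i j with rfl | hij
  · simpa using .inr hx
  · simp [hij]

/-- In a connected graph the cops can move from any configuration to any other. -/
theorem _root_.SimpleGraph.Preconnected.forall_of_copsMove (hΓ : Γ.Preconnected) {k : ℕ}
    {P : (Fin k → V) → Prop} (hP : ∀ c c', CopsMove Γ c c' → P c' → P c)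
    {t : Fin k → V} (ht : P t) (c : Fin k → V) : P c := by
  classical
  have move_one (c : Fin k → V) (j : Fin k) {x y : V} (hxy : Γ.Reachable x y) :
      P (Function.update c j y) → P (Function.update c j x) := by
    obtain ⟨w⟩ := hxy
    induction w with
    | nil => exact id
    | @cons x v _ hxv _ ih =>
      refine fun hy => hP _ _ ?_ ((Function.update_idem x v c).symm ▸ ih hy)
      exact CopsMove.update _ j (by simpa using hxv)
  have (s : Finset (Fin k)) : P (s.piecewise c t) := by
    induction s using Finset.induction_on with
    | empty => simpa using ht
    | insert j s hj ih =>
      rw [Finset.piecewise_insert]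
      refine move_one _ j (hΓ (c j) (t j)) ?_
      rwa [← Finset.piecewise_eq_of_notMem s c t hj, Function.update_eq_self]
  simpa using this Finset.univ

variable (Γ) in
def CopsWinOn {k : ℕ} (c : Fin k → V) (S : Set V) : Prop :=
  ∀ r ∈ S, (∀ i, c i ≠ r) → CopsWin Γ c r

/-- While the cops `u` keep the robber inside `S`, the other cops can walk anywhere. -/
theorem copsWinOn_append_of_confined (hΓ : Γ.Preconnected) {m n : ℕ} {u : Fin m → V}
    {S : Set V} (hS : ∀ r r', r ∈ S → RobberMove Γ r r' → (∀ i, u i ≠ r') → r' ∈ S)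
    {t : Fin n → V} (ht : CopsWinOn Γ (Fin.append u t) S) (q : Fin n → V) :
    CopsWinOn Γ (Fin.append u q) S := by
  refine hΓ.forall_of_copsMove (P := fun q => CopsWinOn Γ (Fin.append u q) S)
    (fun q q' hq hq' r hr _ => ?_) ht q
  refine .step _ _ _ ((CopsMove.refl u).append hq) fun r' hm hfree => ?_
  exact hq' r' (hS r r' hr hm fun i hi => hfree (Fin.castAdd _ i) (by simpa using hi)) hfree

theorem copsWinWith_card [Fintype V] (Γ : SimpleGraph V) : CopsWinWith Γ (Fintype.card V) :=
  ⟨(Fintype.equivFin V).symm, fun r hr => (hr _ ((Fintype.equivFin V).symm_apply_apply r)).elim⟩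

theorem copsWinWith_surroundNumber [Fintype V] (Γ : SimpleGraph V) :
    CopsWinWith Γ (surroundNumber Γ) :=
  Nat.sInf_mem (s := {k | CopsWinWith Γ k}) ⟨_, copsWinWith_card Γ⟩

end Game

variable {m n k : ℕ}

theorem RobberMove.fst {x y : α × β} (h : RobberMove (lexProd G H) x y) :
    RobberMove G x.1 y.1 := by
  rcases h with rfl | h
  · exact .inl rfl
  · rcases lexProd_adj.1 h with h | ⟨h, -⟩
    exacts [.inr h, .inl h.symm]

theorem RobberMove.snd_of_fst_eq {x y : α × β} (h : RobberMove (lexProd G H) x y)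
    (hxy : x.1 = y.1) : RobberMove H x.2 y.2 := by
  rcases h with rfl | h
  · exact .inl rfl
  · rcases lexProd_adj.1 h with h | ⟨-, h⟩
    exacts [absurd h (hxy ▸ G.irrefl), .inr h]

theorem CopsMove.lexProd_fiber (g : α) {c c' : Fin n → β} (h : CopsMove H c c') :
    CopsMove (lexProd G H) (fun j => (g, c j)) (fun j => (g, c' j)) := by
  intro j
  rcases h j with h | h
  · simp [h]
  · simp [h]

def GuardsFiber (G : SimpleGraph α) (u : Fin m → α × β) (g : α) : Prop :=
  ∀ x : α × β, G.Adj g x.1 → ∃ i, u i = x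

theorem GuardsFiber.append {u : Fin m → α × β} {g : α} (hu : GuardsFiber G u g)
    (v : Fin n → α × β) : GuardsFiber G (Fin.append u v) g := by
  intro x hx
  obtain ⟨i, rfl⟩ := hu x hx
  exact ⟨Fin.castAdd n i, by simp⟩

theorem GuardsFiber.fst_eq_of_robberMove {u : Fin m → α × β} {g : α} (hu : GuardsFiber G u g)
    {x y : α × β} (hx : x.1 = g) (hm : RobberMove (lexProd G H) x y) (hfree : ∀ i, u i ≠ y) :
    y.1 = g := by
  subst hx
  rcases hm.fst with h | h
  · exact h
  · obtain ⟨i, hi⟩ := hu y h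
    exact absurd hi (hfree i)

/-- Inside a guarded fibre, the game on `G ∘ H` is the game on `H`. -/
theorem copsWin_append_fiber {u : Fin m → α × β} {g : α} (hu : GuardsFiber G u g)
    {c : Fin n → β} {h : β} (hw : CopsWin H c h) :
    CopsWin (lexProd G H) (Fin.append u fun j => (g, c j)) (g, h) := by
  induction hw with
  | surround c h c' hmove hsur =>
    refine .surround _ _ _ ((CopsMove.refl u).append (hmove.lexProd_fiber g)) ?_
    rintro ⟨a, b⟩ hadj
    rcases lexProd_adj.1 hadj with hg | ⟨rfl, hb⟩
    · exact hu.append _ _ hg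
    · obtain ⟨j, rfl⟩ := hsur b hb
      exact ⟨Fin.natAdd _ j, by simp⟩
  | step c h c' hmove _ ih =>
    refine .step _ _ _ ((CopsMove.refl u).append (hmove.lexProd_fiber g)) ?_
    rintro ⟨a, b⟩ hm hfree
    obtain rfl : a = g := (hu.append _).fst_eq_of_robberMove rfl hm hfree
    exact ih b (hm.snd_of_fst_eq rfl) fun j hj => hfree (Fin.natAdd _ j) (by simp [hj])

theorem GuardsFiber.copsWinOn (hG : G.Preconnected) (hH : H.Preconnected)
    (hHn : CopsWinWith H n) {u : Fin m → α × β} {g : α} (hu : GuardsFiber G u g)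
    (q : Fin n → α × β) : CopsWinOn (lexProd G H) (Fin.append u q) {x | x.1 = g} := by
  obtain ⟨c, hc⟩ := hHn
  refine copsWinOn_append_of_confined (lexProd_preconnected hG hH) (t := fun j => (g, c j))
    (fun _ _ hx hm hfree => hu.fst_eq_of_robberMove hx hm hfree) ?_ q
  rintro ⟨a, b⟩ (rfl : a = g) hfree
  exact copsWin_append_fiber hu (hc b fun j hj => hfree (Fin.natAdd _ j) (by simp [hj]))

variable [Fintype β]

/-- `k * |V(H)|` cops filling the fibres over the vertices `d i`. -/
noncomputable def fiberCops (d : Fin k → α) : Fin (k * Fintype.card β) → α × β :=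
  fun i => Prod.map d (Fintype.equivFin β).symm (finProdFinEquiv.symm i)

theorem exists_fiberCops_eq (d : Fin k → α) (a : Fin k) (b : β) :
    ∃ i, fiberCops d i = (d a, b) :=
  ⟨finProdFinEquiv (a, Fintype.equivFin β b), by simp [fiberCops]⟩

theorem ne_fst_of_append_fiberCops_ne {d : Fin k → α} {q : Fin n → α × β} {r : α × β}
    (hfree : ∀ i, Fin.append (fiberCops d) q i ≠ r) (a : Fin k) : d a ≠ r.1 := by
  intro ha
  obtain ⟨i, hi⟩ := exists_fiberCops_eq d a r.2
  exact hfree (Fin.castAdd n i) (by simp [hi, ha])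

theorem CopsMove.fiberCops {d d' : Fin k → α} (h : CopsMove G d d') :
    CopsMove (lexProd G H) (fiberCops (β := β) d) (fiberCops d') := by
  intro i
  obtain ⟨⟨a, b⟩, rfl⟩ := finProdFinEquiv.surjective i
  rcases h a with h | h
  · simp [SurroundGame.fiberCops, h]
  · simp [SurroundGame.fiberCops, h]

theorem Surrounded.guardsFiber_fiberCops {d : Fin k → α} {g : α} (h : Surrounded G d g) :
    GuardsFiber G (fiberCops (β := β) d) g := by
  intro x hx
  obtain ⟨a, ha⟩ := h x.1 hx
  obtain ⟨i, hi⟩ := exists_fiberCops_eq d a x.2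
  exact ⟨i, by rw [hi, ha]⟩

theorem copsWin_lexProd_of_copsWin (hG : G.Preconnected) (hH : H.Preconnected)
    (hHn : CopsWinWith H n) {d : Fin k → α} {g : α} (hw : CopsWin G d g)
    (q : Fin n → α × β) (r : α × β) (hr : r.1 = g) :
    CopsWin (lexProd G H) (Fin.append (fiberCops d) q) r := by
  induction hw generalizing q r with
  | surround d g d' hmove hsur =>
    have hu := hsur.guardsFiber_fiberCops (β := β)
    refine .step _ _ _ (hmove.fiberCops.append (.refl q)) fun r' hm hfree => ?_
    exact hu.copsWinOn hG hH hHn q r' ((hu.append q).fst_eq_of_robberMove hr hm hfree) hfree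
  | step d g d' hmove _ ih =>
    refine .step _ _ _ (hmove.fiberCops.append (.refl q)) fun r' hm hfree => ?_
    exact ih r'.1 (hr ▸ hm.fst) (ne_fst_of_append_fiberCops_ne hfree) q r' rfl

theorem CopsWinWith.lexProd (hG : G.Connected) (hH : H.Connected) (hGk : CopsWinWith G k)
    (hHn : CopsWinWith H n) : CopsWinWith (lexProd G H) (k * Fintype.card β + n) := by
  obtain ⟨c, hc⟩ := hGk
  obtain ⟨a⟩ := hG.nonempty
  obtain ⟨b⟩ := hH.nonempty
  refine ⟨Fin.append (fiberCops c) fun _ => (a, b), fun r hfree => ?_⟩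
  exact copsWin_lexProd_of_copsWin hG.preconnected hH.preconnected hHn
    (hc r.1 (ne_fst_of_append_fiberCops_ne hfree)) _ r rfl

end SurroundGame

end

/-- For connected graphs, `σ(G ∘ H) ≤ σ(G)·|V(H)| + σ(H)`. -/
theorem surroundNumber_lexProd {α β : Type*} [Fintype α] [Fintype β]
    (G : SimpleGraph α) (H : SimpleGraph β)
    (hG : G.Connected) (hH : H.Connected) :
    surroundNumber (lexProd G H) ≤
      surroundNumber G * Fintype.card β + surroundNumber H :=
  Nat.sInf_le ((copsWinWith_surroundNumber G).lexProd hG hH (copsWinWith_surroundNumber H))
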